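/- Fidelity–trace-distance bound via Powers–Størmer: for positive semidefinite A, C ∈ M_n(ℂ) with tr(A) = tr(C) = 1, one has 2(1 − F(A,C)) ≤ ‖A^{1/2} − C^{1/2}‖₂² ≤ ‖A − C‖₁, where F(A,C) = tr|A^{1/2} C^{1/2}| is the fidelity; hence 4(1 − F(A,C))² ≤ ‖A − C‖₁². -/

import Mathlib

open Matrix
open scoped ComplexOrder

noncomputable section

namespace Matrix.PosSemidef

/-- The positive square root of a positive semidefinite matrix (as in the older Mathlib). -/
def sqrt {n 𝕜 : Type*} [Fintype n] [DecidableEq n] [RCLike 𝕜] {A : Matrix n n 𝕜}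
    (hA : PosSemidef A) : Matrix n n 𝕜 :=
  (hA.1.eigenvectorUnitary : Matrix n n 𝕜) * diagonal ((↑) ∘ (√·) ∘ hA.1.eigenvalues) *
    (star hA.1.eigenvectorUnitary : Matrix n n 𝕜)

lemma posSemidef_sqrt {n 𝕜 : Type*} [Fintype n] [DecidableEq n] [RCLike 𝕜] {A : Matrix n n 𝕜}
    (hA : PosSemidef A) : PosSemidef hA.sqrt := by
  have hD : PosSemidef (diagonal ((fun x : ℝ => (x : 𝕜)) ∘ Real.sqrt ∘ hA.1.eigenvalues)) := by
    refine posSemidef_diagonal_iff.mpr fun i ↦ ?_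
    rw [Function.comp_apply, RCLike.nonneg_iff]
    constructor
    · simp only [Function.comp_apply, RCLike.ofReal_re]; exact Real.sqrt_nonneg _
    · simp only [Function.comp_apply, RCLike.ofReal_im]
  have := hD.mul_mul_conjTranspose_same (hA.1.eigenvectorUnitary : Matrix n n 𝕜)
  unfold sqrt
  convert this using 2
  first | rfl | simp [Matrix.star_eq_conjTranspose]

end Matrix.PosSemidef

abbrev Mat (n : ℕ) := Matrix (Fin n) (Fin n) ℂ

/-- Apply `φ` entrywise to the `n × n` blocks of an `m·n × m·n` matrix. -/
def blockApply {n k : ℕ} (φ : Mat n →ₗ[ℂ] Mat k) (m : ℕ)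
    (M : Matrix (Fin m × Fin n) (Fin m × Fin n) ℂ) :
    Matrix (Fin m × Fin k) (Fin m × Fin k) ℂ :=
  Matrix.of fun p q => φ (Matrix.of fun a b => M (p.1, a) (q.1, b)) p.2 q.2

/-- Complete positivity of a linear map between matrix algebras. -/
def IsCP {n k : ℕ} (φ : Mat n →ₗ[ℂ] Mat k) : Prop :=
  ∀ (m : ℕ) (M : Matrix (Fin m × Fin n) (Fin m × Fin n) ℂ),
    M.PosSemidef → (blockApply φ m M).PosSemidef

/-- Trace preservation. -/
def IsTP {n k : ℕ} (φ : Mat n →ₗ[ℂ] Mat k) : Prop :=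
  ∀ X : Mat n, (φ X).trace = X.trace

/-- The Hilbert–Schmidt adjoint of `φ`, characterized by
`tr (hsAdj φ A * Xᴴ) = tr (A * (φ X)ᴴ)` for all `X`. -/
def hsAdj {n k : ℕ} (φ : Mat n →ₗ[ℂ] Mat k) (A : Mat k) : Mat n :=
  Matrix.of fun i j => (A * (φ (Matrix.single i j 1))ᴴ).trace

/-- The trace norm `tr |X| = tr ((Xᴴ X)^{1/2})`. -/
def traceNorm {n : ℕ} (X : Mat n) : ℝ :=
  ((Matrix.posSemidef_conjTranspose_mul_self X).sqrt.trace).re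


/-- The positive square root of a positive definite matrix. -/
def sqrtPD {n : ℕ} {B : Mat n} (hB : B.PosDef) : Mat n := hB.posSemidef.sqrt

/-- `B^{-1/2}` for a positive definite `B`. -/
def invSqrtPD {n : ℕ} {B : Mat n} (hB : B.PosDef) : Mat n := (sqrtPD hB)⁻¹

/-- `B^{-1/4}` for a positive definite `B`. -/
def invFourthPD {n : ℕ} {B : Mat n} (hB : B.PosDef) : Mat n :=
  (hB.posSemidef.posSemidef_sqrt.sqrt)⁻¹

/-- The sandwiched 2-Rényi quasi-relative entropy functional
`S₂(A|B) = tr ((B^{-1/4} A B^{-1/4})²)`. -/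
def S2 {n : ℕ} (A : Mat n) {B : Mat n} (hB : B.PosDef) : ℝ :=
  (((invFourthPD hB * A * invFourthPD hB) ^ 2).trace).re

/-- The squared Araki–Masuda weighted 2-norm `‖X‖²_{B,2}`. -/
def wNormSq {n : ℕ} (X : Mat n) {B : Mat n} (hB : B.PosDef) : ℝ :=
  (((invFourthPD hB * X * invFourthPD hB)ᴴ * (invFourthPD hB * X * invFourthPD hB)).trace).re

/-- The Petz recovery map `Y ↦ B^{1/2} φ*(φ(B)^{-1/2} Y φ(B)^{-1/2}) B^{1/2}`. -/
def petz {n k : ℕ} (φ : Mat n →ₗ[ℂ] Mat k) {B : Mat n} (hB : B.PosDef)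
    (hφB : (φ B).PosDef) (Y : Mat k) : Mat n :=
  sqrtPD hB * hsAdj φ (invSqrtPD hφB * Y * invSqrtPD hφB) * sqrtPD hB

/-- Squared Frobenius (Hilbert–Schmidt) norm. -/
def frobSq {n : ℕ} (X : Mat n) : ℝ := ((Xᴴ * X).trace).re

/-- Fidelity `F(A,B) = tr |A^{1/2} B^{1/2}|` of positive semidefinite matrices. -/
def fid {n : ℕ} {A B : Mat n} (hA : A.PosSemidef) (hB : B.PosSemidef) : ℝ :=
  traceNorm (hA.sqrt * hB.sqrt)

namespace Matrix.PosSemidef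

open scoped MatrixOrder

lemma sqrt_eq_cfc_sqrt {n 𝕜 : Type*} [Fintype n] [DecidableEq n] [RCLike 𝕜] {A : Matrix n n 𝕜}
    (hA : PosSemidef A) : hA.sqrt = CFC.sqrt A := by
  rw [CFC.sqrt_eq_cfc, cfc_nnreal_eq_real _ A hA.nonneg, hA.1.cfc_eq]
  unfold sqrt IsHermitian.cfc
  rw [Unitary.conjStarAlgAut_apply]
  congr 3
  funext i
  simp [Real.coe_sqrt, Real.coe_toNNReal', hA.eigenvalues_nonneg i]

lemma sqrt_mul_self {n 𝕜 : Type*} [Fintype n] [DecidableEq n] [RCLike 𝕜] {A : Matrix n n 𝕜}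
    (hA : PosSemidef A) : hA.sqrt * hA.sqrt = A := by
  rw [sqrt_eq_cfc_sqrt]
  exact CFC.sqrt_mul_sqrt_self A hA.nonneg

lemma eq_sqrt_of_sq_eq {n 𝕜 : Type*} [Fintype n] [DecidableEq n] [RCLike 𝕜] {A B : Matrix n n 𝕜}
    (hA : PosSemidef A) (hB : PosSemidef B) (hAB : A ^ 2 = B) : A = hB.sqrt := by
  rw [sqrt_eq_cfc_sqrt]
  exact (CFC.sqrt_unique (by rw [← pow_two, hAB]) hA.nonneg).symm

end Matrix.PosSemidef

lemma star_mul_self_mul_eq_diagonal' {n : ℕ} {X : Mat n} (hX : X.IsHermitian) :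
    star (hX.eigenvectorUnitary : Mat n) * X * (hX.eigenvectorUnitary : Mat n)
      = Matrix.diagonal (fun i => ((hX.eigenvalues i : ℝ) : ℂ)) := by
  have := hX.conjStarAlgAut_star_eigenvectorUnitary
  simp only [Unitary.conjStarAlgAut_apply, Unitary.coe_star, star_star] at this
  exact this

set_option maxHeartbeats 1000000

namespace PS
variable {n : ℕ}

lemma star_mul_self_unitary (U : Matrix.unitaryGroup (Fin n) ℂ) :
    star (U : Mat n) * (U : Mat n) = 1 := by
  exact_mod_cast Unitary.coe_star_mul_self U

lemma mul_star_self_unitary (U : Matrix.unitaryGroup (Fin n) ℂ) :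
    (U : Mat n) * star (U : Mat n) = 1 := by
  exact_mod_cast Unitary.coe_mul_star_self U

lemma trace_unitary_conj (D : Mat n) (U : Matrix.unitaryGroup (Fin n) ℂ) :
    ((U : Mat n) * D * star (U : Mat n)).trace = D.trace := by
  rw [Matrix.trace_mul_cycle, star_mul_self_unitary, one_mul]

lemma trace_re_eq_sum (G : Mat n) :
    ((Gᴴ * G).trace).re = ∑ j, ∑ i, ‖G i j‖ ^ 2 := by
  rw [Matrix.trace]
  rw [Complex.re_sum]
  refine Finset.sum_congr rfl fun j _ => ?_
  rw [Matrix.diag_apply, Matrix.mul_apply, Complex.re_sum]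
  refine Finset.sum_congr rfl fun i _ => ?_
  have : (starRingEnd ℂ) (G i j) * G i j = ((‖G i j‖ ^ 2 : ℝ) : ℂ) := by
    rw [← Complex.normSq_eq_norm_sq, ← Complex.normSq_eq_conj_mul_self]
  simp [Matrix.conjTranspose_apply, this]
  norm_cast


lemma re_trace_nonneg {P : Mat n} (hP : P.PosSemidef) : 0 ≤ (P.trace).re := by
  have h : P = hP.sqrtᴴ * hP.sqrt := by
    rw [hP.posSemidef_sqrt.1, hP.sqrt_mul_self]
  rw [h, trace_re_eq_sum]
  positivity

lemma re_trace_mul_nonneg {P Q : Mat n} (hP : P.PosSemidef) (hQ : Q.PosSemidef) :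
    0 ≤ ((P * Q).trace).re := by
  have h1 : P * Q = P * hQ.sqrt * hQ.sqrt := by rw [mul_assoc, hQ.sqrt_mul_self]
  have h2 : hQ.sqrt * P * hQ.sqrt = hQ.sqrt * P * hQ.sqrtᴴ := by
    rw [hQ.posSemidef_sqrt.1]
  rw [h1, Matrix.trace_mul_cycle, h2]
  exact re_trace_nonneg (hP.mul_mul_conjTranspose_same hQ.sqrt)

/-- Apply a real function to a Hermitian matrix through its spectral decomposition. -/
def fmap {X : Mat n} (hX : X.IsHermitian) (f : ℝ → ℝ) : Mat n :=
  (hX.eigenvectorUnitary : Mat n) *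
    Matrix.diagonal (fun i => ((f (hX.eigenvalues i) : ℝ) : ℂ)) *
    star (hX.eigenvectorUnitary : Mat n)

variable {X : Mat n} (hX : X.IsHermitian) (f g : ℝ → ℝ)

lemma fmap_congr {f g : ℝ → ℝ} (h : ∀ x, f x = g x) : fmap hX f = fmap hX g := by
  unfold fmap; simp only [h]

lemma fmap_mul : fmap hX f * fmap hX g = fmap hX (fun x => f x * g x) := by
  unfold fmap
  simp only [mul_assoc]
  rw [← mul_assoc (star (hX.eigenvectorUnitary : Mat n)) (hX.eigenvectorUnitary : Mat n),
    star_mul_self_unitary, one_mul, ← mul_assoc (Matrix.diagonal _) (Matrix.diagonal _),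
    Matrix.diagonal_mul_diagonal]
  norm_cast

lemma fmap_trace : (fmap hX f).trace = ∑ i, ((f (hX.eigenvalues i) : ℝ) : ℂ) := by
  unfold fmap
  rw [trace_unitary_conj, Matrix.trace_diagonal]

lemma fmap_trace_re : ((fmap hX f).trace).re = ∑ i, f (hX.eigenvalues i) := by
  rw [fmap_trace, Complex.re_sum]
  norm_num

lemma fmap_isHermitian : (fmap hX f).IsHermitian := by
  have hD : (Matrix.diagonal (fun i => ((f (hX.eigenvalues i) : ℝ) : ℂ)))ᴴ
      = Matrix.diagonal (fun i => ((f (hX.eigenvalues i) : ℝ) : ℂ)) := by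
    ext i j
    by_cases h : i = j
    · subst h; simp [Matrix.conjTranspose_apply, Complex.conj_ofReal]
    · simp [Matrix.conjTranspose_apply, Matrix.diagonal_apply_ne _ h,
        Matrix.diagonal_apply_ne _ (Ne.symm h)]
  unfold fmap Matrix.IsHermitian
  simp only [Matrix.star_eq_conjTranspose, Matrix.conjTranspose_mul,
    Matrix.conjTranspose_conjTranspose, hD, Matrix.mul_assoc]

lemma fmap_posSemidef (hf : ∀ x, 0 ≤ f x) : (fmap hX f).PosSemidef := by
  have hd : (Matrix.diagonal (fun i => ((f (hX.eigenvalues i) : ℝ) : ℂ))).PosSemidef := by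
    refine Matrix.PosSemidef.diagonal fun i => ?_
    show (0:ℂ) ≤ _
    rw [Complex.zero_le_real]
    exact hf _
  have h2 := hd.mul_mul_conjTranspose_same (hX.eigenvectorUnitary : Mat n)
  unfold fmap
  rwa [Matrix.star_eq_conjTranspose]

lemma fmap_id : fmap hX (fun x => x) = X := by
  conv_rhs => rw [hX.spectral_theorem]
  rfl

lemma fmap_one : fmap hX (fun _ => 1) = 1 := by
  unfold fmap
  simp only [Complex.ofReal_one, Matrix.diagonal_one, mul_one]
  exact mul_star_self_unitary _

lemma fmap_add : fmap hX f + fmap hX g = fmap hX (fun x => f x + g x) := by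
  unfold fmap
  rw [← Matrix.add_mul, ← Matrix.mul_add, Matrix.diagonal_add]
  push_cast
  rfl

lemma fmap_sub : fmap hX f - fmap hX g = fmap hX (fun x => f x - g x) := by
  unfold fmap
  rw [← Matrix.sub_mul, ← Matrix.mul_sub, Matrix.diagonal_sub]
  push_cast
  rfl


lemma traceNorm_nonneg (X : Mat n) : 0 ≤ traceNorm X :=
  re_trace_nonneg (Matrix.posSemidef_conjTranspose_mul_self X).posSemidef_sqrt

lemma traceNorm_eq_sum_sqrt (X : Mat n) :
    traceNorm X
      = ∑ i, Real.sqrt ((Matrix.posSemidef_conjTranspose_mul_self X).1.eigenvalues i) := by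
  unfold traceNorm Matrix.PosSemidef.sqrt
  rw [trace_unitary_conj, Matrix.trace_diagonal, Complex.re_sum]
  norm_num [Function.comp]

lemma traceNorm_hermitian {X : Mat n} (hX : X.IsHermitian) :
    traceNorm X = ∑ i, |hX.eigenvalues i| := by
  have habs := fmap_posSemidef hX (fun x => |x|) (fun x => abs_nonneg x)
  have hsq : (fmap hX fun x => |x|) ^ 2 = Xᴴ * X := by
    rw [pow_two, hX.eq]
    calc fmap hX (fun x => |x|) * fmap hX (fun x => |x|)
        = fmap hX (fun x => x * x) := by
          rw [fmap_mul]; exact fmap_congr hX fun x => abs_mul_abs_self x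
      _ = fmap hX (fun x => x) * fmap hX (fun x => x) := by rw [fmap_mul]
      _ = X * X := by rw [fmap_id]
  have h := habs.eq_sqrt_of_sq_eq (Matrix.posSemidef_conjTranspose_mul_self X) hsq
  unfold traceNorm
  rw [← h, fmap_trace, Complex.re_sum]
  norm_num

lemma key_aux {X Q : Mat n} (hQpsd : Q.PosSemidef) (hQeq : Q = Xᴴ * X) :
    (X.trace).re ≤ ∑ i, Real.sqrt (hQpsd.1.eigenvalues i) := by
  set U : Mat n := (hQpsd.1.eigenvectorUnitary : Mat n) with hUdef
  have hUU : star U * U = 1 := by rw [hUdef]; exact star_mul_self_unitary _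
  have hUU' : U * star U = 1 := by rw [hUdef]; exact mul_star_self_unitary _
  have hdiag : star U * Q * U
      = Matrix.diagonal (fun i => ((hQpsd.1.eigenvalues i : ℝ) : ℂ)) := by
    rw [hUdef]
    exact star_mul_self_mul_eq_diagonal' hQpsd.1
  have hY : star (star U * X * U) * (star U * X * U)
      = Matrix.diagonal (fun i => ((hQpsd.1.eigenvalues i : ℝ) : ℂ)) := by
    have h2 : star (star U * X * U) * (star U * X * U) = star U * Q * U := by
      rw [hQeq, ← Matrix.star_eq_conjTranspose X]
      simp only [StarMul.star_mul, star_star, Matrix.mul_assoc]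
      rw [← Matrix.mul_assoc U (star U) (X * U), hUU', one_mul]
    rw [h2, hdiag]
  have hcol : ∀ i, (∑ j, Complex.normSq ((star U * X * U) j i)) = hQpsd.1.eigenvalues i := by
    intro i
    have h1 := congrFun (congrFun hY i) i
    rw [Matrix.mul_apply] at h1
    simp only [Matrix.star_apply, Matrix.diagonal_apply_eq] at h1
    have h3 := congrArg Complex.re h1
    rw [Complex.re_sum] at h3
    simp only [Complex.ofReal_re] at h3
    rw [← h3]
    refine (Finset.sum_congr rfl fun j _ => ?_)
    simp [Complex.star_def, Complex.mul_conj, mul_comm]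
  have hbound : ∀ i, ((star U * X * U) i i).re ≤ Real.sqrt (hQpsd.1.eigenvalues i) := by
    intro i
    calc ((star U * X * U) i i).re ≤ ‖(star U * X * U) i i‖ := Complex.re_le_norm _
      _ = Real.sqrt (Complex.normSq ((star U * X * U) i i)) := Complex.norm_def _
      _ ≤ Real.sqrt (∑ j, Complex.normSq ((star U * X * U) j i)) :=
          Real.sqrt_le_sqrt (Finset.single_le_sum
            (f := fun j => Complex.normSq ((star U * X * U) j i))
            (fun j _ => Complex.normSq_nonneg _) (Finset.mem_univ i))
      _ = Real.sqrt (hQpsd.1.eigenvalues i) := by rw [hcol i]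
  have htr : ((star U * X * U).trace).re = (X.trace).re := by
    rw [Matrix.trace_mul_cycle, hUU', one_mul]
  rw [← htr, Matrix.trace, Complex.re_sum]
  exact Finset.sum_le_sum fun i _ => hbound i

lemma re_trace_le_traceNorm (X : Mat n) : (X.trace).re ≤ traceNorm X := by
  rw [traceNorm_eq_sum_sqrt]
  exact key_aux (Matrix.posSemidef_conjTranspose_mul_self X) rfl


lemma cs_trace (G H : Mat n) :
    ((Gᴴ * H).trace).re
      ≤ Real.sqrt ((Gᴴ * G).trace).re * Real.sqrt ((Hᴴ * H).trace).re := by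
  have h1 : ((Gᴴ * H).trace).re ≤ ∑ j, ∑ i, ‖G i j‖ * ‖H i j‖ := by
    rw [Matrix.trace, Complex.re_sum]
    refine Finset.sum_le_sum fun j _ => ?_
    rw [Matrix.diag_apply, Matrix.mul_apply, Complex.re_sum]
    refine Finset.sum_le_sum fun i _ => ?_
    calc (Gᴴ j i * H i j).re ≤ ‖Gᴴ j i * H i j‖ := Complex.re_le_norm _
      _ = ‖G i j‖ * ‖H i j‖ := by
          rw [norm_mul, Matrix.conjTranspose_apply, Complex.star_def, Complex.norm_conj]
  have h2 := Finset.sum_mul_sq_le_sq_mul_sq Finset.univ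
    (fun p : Fin n × Fin n => ‖G p.2 p.1‖)
    (fun p : Fin n × Fin n => ‖H p.2 p.1‖)
  have hnn : (0:ℝ) ≤ ∑ p : Fin n × Fin n, ‖G p.2 p.1‖ * ‖H p.2 p.1‖ := by
    positivity
  have h3 : ∑ p : Fin n × Fin n, ‖G p.2 p.1‖ * ‖H p.2 p.1‖
      ≤ Real.sqrt (∑ p : Fin n × Fin n, ‖G p.2 p.1‖ ^ 2)
        * Real.sqrt (∑ p : Fin n × Fin n, ‖H p.2 p.1‖ ^ 2) := by
    rw [← Real.sqrt_mul (by positivity)]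
    calc ∑ p : Fin n × Fin n, ‖G p.2 p.1‖ * ‖H p.2 p.1‖
        = Real.sqrt ((∑ p : Fin n × Fin n,
            ‖G p.2 p.1‖ * ‖H p.2 p.1‖) ^ 2) := by
          rw [Real.sqrt_sq hnn]
      _ ≤ _ := Real.sqrt_le_sqrt h2
  rw [trace_re_eq_sum, trace_re_eq_sum]
  calc ((Gᴴ * H).trace).re ≤ ∑ j, ∑ i, ‖G i j‖ * ‖H i j‖ := h1
    _ = ∑ p : Fin n × Fin n, ‖G p.2 p.1‖ * ‖H p.2 p.1‖ := by
        rw [Fintype.sum_prod_type]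
    _ ≤ _ := h3
    _ = Real.sqrt (∑ j, ∑ i, ‖G i j‖ ^ 2)
        * Real.sqrt (∑ j, ∑ i, ‖H i j‖ ^ 2) := by
        rw [Fintype.sum_prod_type]
        rw [Fintype.sum_prod_type]


lemma fid_le_one {A C : Mat n} (hA : A.PosSemidef) (hC : C.PosSemidef)
    (htrA : A.trace = 1) (htrC : C.trace = 1) : fid hA hC ≤ 1 := by
  have hS : hA.sqrtᴴ = hA.sqrt := hA.posSemidef_sqrt.1
  have hT : hC.sqrtᴴ = hC.sqrt := hC.posSemidef_sqrt.1
  have hSS : hA.sqrt * hA.sqrt = A := hA.sqrt_mul_self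
  have hTT : hC.sqrt * hC.sqrt = C := hC.sqrt_mul_self
  have hQpsd := Matrix.posSemidef_conjTranspose_mul_self (hA.sqrt * hC.sqrt)
  set μ : Fin n → ℝ := hQpsd.1.eigenvalues with hμdef
  have hμ0 : ∀ i, 0 ≤ μ i := hQpsd.eigenvalues_nonneg
  set V : Mat n := (hQpsd.1.eigenvectorUnitary : Mat n) with hVdef
  have hVV : star V * V = 1 := by rw [hVdef]; exact star_mul_self_unitary _
  have hVV' : V * star V = 1 := by rw [hVdef]; exact mul_star_self_unitary _
  have hdiag : star V * ((hA.sqrt * hC.sqrt)ᴴ * (hA.sqrt * hC.sqrt)) * V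
      = Matrix.diagonal (fun i => ((μ i : ℝ) : ℂ)) := by
    rw [hVdef, hμdef]; exact star_mul_self_mul_eq_diagonal' hQpsd.1
  set K : Mat n := hA.sqrt * hC.sqrt * V with hKdef
  have hKK : star K * K = Matrix.diagonal (fun i => ((μ i : ℝ) : ℂ)) := by
    rw [← hdiag, hKdef, ← Matrix.star_eq_conjTranspose]
    simp only [StarMul.star_mul, star_star, Matrix.mul_assoc]
  set d : Fin n → ℂ := fun j => if μ j = 0 then 0 else (((Real.sqrt (μ j))⁻¹ : ℝ) : ℂ) with hddef
  set e : Fin n → ℂ := fun j => if μ j = 0 then 0 else 1 with hedef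
  have hstard : star d = d := by
    funext j
    rw [hddef]
    simp only [Pi.star_apply]
    by_cases h : μ j = 0 <;> simp [h, Complex.conj_ofReal]
  set N : Mat n := K * Matrix.diagonal d with hNdef
  have hstardiag : star (Matrix.diagonal d) = Matrix.diagonal d := by
    rw [Matrix.star_eq_conjTranspose, Matrix.diagonal_conjTranspose, hstard]
  have hstarN : star N = Matrix.diagonal d * star K := by
    rw [hNdef, StarMul.star_mul, hstardiag]
  have hNsN : star N * N = Matrix.diagonal e := by
    rw [hstarN, hNdef, Matrix.mul_assoc, ← Matrix.mul_assoc (star K) K, hKK,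
      ← Matrix.mul_assoc, Matrix.diagonal_mul_diagonal, Matrix.diagonal_mul_diagonal]
    refine congrArg Matrix.diagonal (funext fun j => ?_)
    rw [hddef, hedef]
    by_cases h : μ j = 0
    · simp [h]
    · have h1 : Real.sqrt (μ j) ≠ 0 := by
        rw [Real.sqrt_ne_zero']
        exact lt_of_le_of_ne (hμ0 j) (Ne.symm h)
      have h2 : ((Real.sqrt (μ j))⁻¹ : ℝ) * μ j * ((Real.sqrt (μ j))⁻¹ : ℝ) = 1 := by
        rw [← Real.mul_self_sqrt (hμ0 j)]
        field_simp
        rw [Real.sqrt_sq (Real.sqrt_nonneg _)]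
      simp only [h, if_false]
      rw [show ((((Real.sqrt (μ j))⁻¹ : ℝ) : ℂ)) * ((μ j : ℝ) : ℂ) * ((((Real.sqrt (μ j))⁻¹ : ℝ) : ℂ))
          = ((((Real.sqrt (μ j))⁻¹ * μ j * (Real.sqrt (μ j))⁻¹ : ℝ)) : ℂ) by push_cast; ring,
        h2, Complex.ofReal_one]
  have hNe : N * Matrix.diagonal e = N := by
    rw [hNdef, Matrix.mul_assoc, Matrix.diagonal_mul_diagonal]
    refine congrArg (fun D => K * D) (congrArg Matrix.diagonal (funext fun j => ?_))
    rw [hddef, hedef]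
    by_cases h : μ j = 0 <;> simp [h]
  have hPP : (N * star N) * (N * star N) = N * star N := by
    rw [Matrix.mul_assoc N (star N) (N * star N), ← Matrix.mul_assoc (star N) N (star N),
      hNsN, ← Matrix.mul_assoc N (Matrix.diagonal e) (star N), hNe]
  have h1P : (1 - N * star N).PosSemidef := by
    have hH : (1 - N * star N)ᴴ = 1 - N * star N := by
      rw [Matrix.conjTranspose_sub, Matrix.conjTranspose_one, ← Matrix.star_eq_conjTranspose,
        StarMul.star_mul, star_star]
    have hsq : (1 - N * star N)ᴴ * (1 - N * star N) = 1 - N * star N := by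
      rw [hH]
      rw [Matrix.sub_mul, Matrix.mul_sub, Matrix.mul_sub, hPP]
      simp only [Matrix.mul_one, Matrix.one_mul]
      abel
    rw [← hsq]
    exact Matrix.posSemidef_conjTranspose_mul_self _
  -- the three claims
  have claim1 : (((hA.sqrt * N)ᴴ * (hC.sqrt * V)).trace).re = ∑ i, Real.sqrt (μ i) := by
    have hGH : (hA.sqrt * N)ᴴ * (hC.sqrt * V)
        = Matrix.diagonal (fun j => d j * ((μ j : ℝ) : ℂ)) := by
      rw [Matrix.conjTranspose_mul, hS]
      calc Nᴴ * hA.sqrt * (hC.sqrt * V) = star N * (hA.sqrt * hC.sqrt * V) := by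
            rw [← Matrix.star_eq_conjTranspose]
            simp only [Matrix.mul_assoc]
        _ = Matrix.diagonal d * (star K * K) := by
            rw [hstarN, ← hKdef, Matrix.mul_assoc]
        _ = Matrix.diagonal (fun j => d j * ((μ j : ℝ) : ℂ)) := by
            rw [hKK, Matrix.diagonal_mul_diagonal]
    rw [hGH, Matrix.trace_diagonal, Complex.re_sum]
    refine Finset.sum_congr rfl fun j _ => ?_
    rw [hddef]
    by_cases h : μ j = 0
    · simp [h, Real.sqrt_eq_zero']
    · have h1 : Real.sqrt (μ j) ≠ 0 := by
        rw [Real.sqrt_ne_zero']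
        exact lt_of_le_of_ne (hμ0 j) (Ne.symm h)
      have h2 : ((Real.sqrt (μ j))⁻¹ : ℝ) * μ j = Real.sqrt (μ j) := by
        rw [← Real.mul_self_sqrt (hμ0 j)]
        field_simp
        rw [Real.sqrt_sq (Real.sqrt_nonneg _)]
      simp only [h, if_false]
      rw [show ((((Real.sqrt (μ j))⁻¹ : ℝ) : ℂ)) * ((μ j : ℝ) : ℂ)
          = ((((Real.sqrt (μ j))⁻¹ * μ j : ℝ)) : ℂ) by push_cast; ring, h2, Complex.ofReal_re]
  have claim2 : (((hC.sqrt * V)ᴴ * (hC.sqrt * V)).trace).re = 1 := by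
    have : (hC.sqrt * V)ᴴ * (hC.sqrt * V) = star V * C * V := by
      rw [Matrix.conjTranspose_mul, hT, ← Matrix.star_eq_conjTranspose,
        Matrix.mul_assoc, ← Matrix.mul_assoc hC.sqrt hC.sqrt V, hTT, Matrix.mul_assoc]
    rw [this, Matrix.trace_mul_cycle, hVV', Matrix.one_mul, htrC]
    norm_num
  have claim3 : (((hA.sqrt * N)ᴴ * (hA.sqrt * N)).trace).re ≤ 1 := by
    have hGG : (hA.sqrt * N)ᴴ * (hA.sqrt * N) = star N * A * N := by
      rw [Matrix.conjTranspose_mul, hS, ← Matrix.star_eq_conjTranspose,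
        Matrix.mul_assoc, ← Matrix.mul_assoc hA.sqrt hA.sqrt N, hSS, Matrix.mul_assoc]
    have htr1 : ((star N * A * N).trace) = ((A * (N * star N)).trace) := by
      rw [Matrix.trace_mul_cycle]
      exact Matrix.trace_mul_comm _ _
    have htr2 : 0 ≤ ((A * (1 - N * star N)).trace).re := re_trace_mul_nonneg hA h1P
    rw [Matrix.mul_sub, Matrix.mul_one, Matrix.trace_sub, Complex.sub_re, htrA] at htr2
    rw [hGG, htr1]
    simp only [Complex.one_re] at htr2
    linarith
  -- assemble
  have hfid : fid hA hC = ∑ i, Real.sqrt (μ i) := by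
    rw [fid, traceNorm_eq_sum_sqrt]
  rw [hfid, ← claim1]
  calc (((hA.sqrt * N)ᴴ * (hC.sqrt * V)).trace).re
      ≤ Real.sqrt (((hA.sqrt * N)ᴴ * (hA.sqrt * N)).trace).re
        * Real.sqrt (((hC.sqrt * V)ᴴ * (hC.sqrt * V)).trace).re := cs_trace _ _
    _ ≤ 1 := by
        rw [claim2, Real.sqrt_one, mul_one]
        exact Real.sqrt_le_one.mpr claim3


lemma part1 {A C : Mat n} (hA : A.PosSemidef) (hC : C.PosSemidef)
    (htrA : A.trace = 1) (htrC : C.trace = 1) :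
    2 * (1 - fid hA hC) ≤ frobSq (hA.sqrt - hC.sqrt) := by
  have hS : hA.sqrtᴴ = hA.sqrt := hA.posSemidef_sqrt.1
  have hT : hC.sqrtᴴ = hC.sqrt := hC.posSemidef_sqrt.1
  have hexp : (hA.sqrt - hC.sqrt)ᴴ * (hA.sqrt - hC.sqrt)
      = A - hA.sqrt * hC.sqrt - (hC.sqrt * hA.sqrt - C) := by
    rw [Matrix.conjTranspose_sub, hS, hT, Matrix.sub_mul, Matrix.mul_sub, Matrix.mul_sub,
      hA.sqrt_mul_self, hC.sqrt_mul_self]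
  have hfrob : frobSq (hA.sqrt - hC.sqrt)
      = 2 - 2 * ((hA.sqrt * hC.sqrt).trace).re := by
    rw [frobSq, hexp, Matrix.trace_sub, Matrix.trace_sub, Matrix.trace_sub,
      Matrix.trace_mul_comm hC.sqrt hA.sqrt, htrA, htrC]
    simp only [Complex.sub_re, Complex.one_re]
    ring
  have hle : ((hA.sqrt * hC.sqrt).trace).re ≤ fid hA hC := by
    rw [fid]
    exact re_trace_le_traceNorm _
  rw [hfrob]
  linarith

lemma powers_stormer {A C : Mat n} (hA : A.PosSemidef) (hC : C.PosSemidef) :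
    frobSq (hA.sqrt - hC.sqrt) ≤ traceNorm (A - C) := by
  have hS : hA.sqrtᴴ = hA.sqrt := hA.posSemidef_sqrt.1
  have hT : hC.sqrtᴴ = hC.sqrt := hC.posSemidef_sqrt.1
  have hSS : hA.sqrt * hA.sqrt = A := hA.sqrt_mul_self
  have hTT : hC.sqrt * hC.sqrt = C := hC.sqrt_mul_self
  have hB : (hA.sqrt - hC.sqrt).IsHermitian := hA.posSemidef_sqrt.1.sub hC.posSemidef_sqrt.1
  set sgn : ℝ → ℝ := fun x => if 0 ≤ x then 1 else -1 with hsgndef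
  have hMB : fmap hB sgn * (hA.sqrt - hC.sqrt) = fmap hB (fun x => |x|) := by
    calc fmap hB sgn * (hA.sqrt - hC.sqrt)
        = fmap hB sgn * fmap hB (fun x => x) := by rw [fmap_id]
      _ = fmap hB (fun x => sgn x * x) := fmap_mul hB _ _
      _ = fmap hB (fun x => |x|) := by
          refine fmap_congr hB fun x => ?_
          rw [hsgndef]
          by_cases h : 0 ≤ x
          · simp [h, abs_of_nonneg h]
          · simp [h, abs_of_neg (lt_of_not_ge h)]
  have hBM : (hA.sqrt - hC.sqrt) * fmap hB sgn = fmap hB (fun x => |x|) := by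
    calc (hA.sqrt - hC.sqrt) * fmap hB sgn
        = fmap hB (fun x => x) * fmap hB sgn := by rw [fmap_id]
      _ = fmap hB (fun x => x * sgn x) := fmap_mul hB _ _
      _ = fmap hB (fun x => |x|) := by
          refine fmap_congr hB fun x => ?_
          rw [hsgndef]
          by_cases h : 0 ≤ x
          · simp [h, abs_of_nonneg h]
          · simp [h, abs_of_neg (lt_of_not_ge h)]
  have habs_sub : (fmap hB (fun x => |x|) - (hA.sqrt - hC.sqrt)).PosSemidef := by
    have h1 := fmap_sub hB (fun x => |x|) (fun x => x)
    rw [fmap_id] at h1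
    rw [h1]
    exact fmap_posSemidef hB _ fun x => sub_nonneg.mpr (le_abs_self x)
  have habs_add : (fmap hB (fun x => |x|) + (hA.sqrt - hC.sqrt)).PosSemidef := by
    have h1 := fmap_add hB (fun x => |x|) (fun x => x)
    rw [fmap_id] at h1
    rw [h1]
    exact fmap_posSemidef hB _ fun x => by linarith [neg_abs_le x]
  have h1subM : ((1 : Mat n) - fmap hB sgn).PosSemidef := by
    have h1 := fmap_sub hB (fun _ => 1) sgn
    rw [fmap_one] at h1
    rw [h1]
    refine fmap_posSemidef hB _ fun x => ?_
    rw [hsgndef]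
    by_cases h : 0 ≤ x <;> simp [h] <;> norm_num
  have h1addM : ((1 : Mat n) + fmap hB sgn).PosSemidef := by
    have h1 := fmap_add hB (fun _ => 1) sgn
    rw [fmap_one] at h1
    rw [h1]
    refine fmap_posSemidef hB _ fun x => ?_
    rw [hsgndef]
    by_cases h : 0 ≤ x <;> simp [h] <;> norm_num
  -- step 1
  have step1 : frobSq (hA.sqrt - hC.sqrt)
      ≤ ((fmap hB (fun x => |x|) * (hA.sqrt + hC.sqrt)).trace).re := by
    have e1 := re_trace_mul_nonneg habs_sub hA.posSemidef_sqrt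
    have e2 := re_trace_mul_nonneg habs_add hC.posSemidef_sqrt
    rw [Matrix.sub_mul, Matrix.trace_sub, Complex.sub_re] at e1
    rw [Matrix.add_mul, Matrix.trace_add, Complex.add_re] at e2
    have e3 : frobSq (hA.sqrt - hC.sqrt)
        = (((hA.sqrt - hC.sqrt) * hA.sqrt).trace).re
          - (((hA.sqrt - hC.sqrt) * hC.sqrt).trace).re := by
      rw [frobSq, hB.eq, Matrix.mul_sub, Matrix.trace_sub, Complex.sub_re]
    have e4 : ((fmap hB (fun x => |x|) * (hA.sqrt + hC.sqrt)).trace).re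
        = ((fmap hB (fun x => |x|) * hA.sqrt).trace).re
          + ((fmap hB (fun x => |x|) * hC.sqrt).trace).re := by
      rw [Matrix.mul_add, Matrix.trace_add, Complex.add_re]
    rw [e3, e4]
    linarith
  -- step 2
  have hBD : (hA.sqrt - hC.sqrt) * (hA.sqrt + hC.sqrt)
      + (hA.sqrt + hC.sqrt) * (hA.sqrt - hC.sqrt) = (A - C) + (A - C) := by
    simp only [Matrix.sub_mul, Matrix.mul_add, Matrix.add_mul, Matrix.mul_sub, hSS, hTT]
    abel
  have step2 : ((fmap hB (fun x => |x|) * (hA.sqrt + hC.sqrt)).trace)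
      = ((fmap hB sgn * (A - C)).trace) := by
    have hsum : ((fmap hB sgn * (A - C)).trace) + ((fmap hB sgn * (A - C)).trace)
        = ((fmap hB (fun x => |x|) * (hA.sqrt + hC.sqrt)).trace)
          + ((fmap hB (fun x => |x|) * (hA.sqrt + hC.sqrt)).trace) := by
      rw [← Matrix.trace_add, ← Matrix.mul_add, ← hBD, Matrix.mul_add, Matrix.trace_add]
      congr 1
      · rw [← Matrix.mul_assoc, hMB]
      · rw [← Matrix.mul_assoc, Matrix.trace_mul_comm, ← Matrix.mul_assoc, hBM]
    have h2 : (2:ℂ) ≠ 0 := two_ne_zero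
    apply mul_left_cancel₀ h2
    rw [two_mul, two_mul]
    exact hsum.symm
  -- step 3
  have hZ : (A - C).IsHermitian := hA.1.sub hC.1
  have hposZ : (fmap hZ fun x => max x 0).PosSemidef :=
    fmap_posSemidef hZ _ fun x => le_max_right x 0
  have hnegZ : (fmap hZ fun x => max (-x) 0).PosSemidef :=
    fmap_posSemidef hZ _ fun x => le_max_right (-x) 0
  have hZdecomp : (fmap hZ fun x => max x 0) - (fmap hZ fun x => max (-x) 0) = A - C := by
    rw [fmap_sub]
    calc fmap hZ (fun x => max x 0 - max (-x) 0) = fmap hZ (fun x => x) := by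
          refine fmap_congr hZ fun x => ?_
          by_cases h : 0 ≤ x
          · rw [max_eq_left h, max_eq_right (neg_nonpos.mpr h), sub_zero]
          · rw [max_eq_right (le_of_not_ge h),
              max_eq_left (neg_nonneg.mpr (le_of_not_ge h)), zero_sub, neg_neg]
      _ = A - C := fmap_id hZ
  have step3 : ((fmap hB sgn * (A - C)).trace).re ≤ traceNorm (A - C) := by
    have e3 := re_trace_mul_nonneg h1subM hposZ
    have e4 := re_trace_mul_nonneg h1addM hnegZ
    rw [Matrix.sub_mul, Matrix.one_mul, Matrix.trace_sub, Complex.sub_re] at e3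
    rw [Matrix.add_mul, Matrix.one_mul, Matrix.trace_add, Complex.add_re] at e4
    have e5' : fmap hB sgn * (fmap hZ fun x => max x 0)
        - fmap hB sgn * (fmap hZ fun x => max (-x) 0) = fmap hB sgn * (A - C) := by
      rw [← Matrix.mul_sub, hZdecomp]
    have e5 : ((fmap hB sgn * (A - C)).trace).re
        = ((fmap hB sgn * (fmap hZ fun x => max x 0)).trace).re
          - ((fmap hB sgn * (fmap hZ fun x => max (-x) 0)).trace).re := by
      rw [← e5', Matrix.trace_sub, Complex.sub_re]
    have e6 : ((fmap hZ fun x => max x 0).trace).re + ((fmap hZ fun x => max (-x) 0).trace).re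
        = traceNorm (A - C) := by
      rw [traceNorm_hermitian hZ, fmap_trace_re, fmap_trace_re, ← Finset.sum_add_distrib]
      refine Finset.sum_congr rfl fun i _ => ?_
      by_cases h : 0 ≤ hZ.eigenvalues i
      · rw [max_eq_left h, max_eq_right (neg_nonpos.mpr h), add_zero, abs_of_nonneg h]
      · rw [max_eq_right (le_of_not_ge h), max_eq_left (neg_nonneg.mpr (le_of_not_ge h)),
          zero_add, abs_of_neg (lt_of_not_ge h), ]
    rw [e5]
    linarith
  calc frobSq (hA.sqrt - hC.sqrt)
      ≤ ((fmap hB (fun x => |x|) * (hA.sqrt + hC.sqrt)).trace).re := step1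
    _ = ((fmap hB sgn * (A - C)).trace).re := by rw [step2]
    _ ≤ traceNorm (A - C) := step3

end PS

theorem fidelity_trace_distance {n : ℕ} {A C : Mat n}
    (hA : A.PosSemidef) (hC : C.PosSemidef) (htrA : A.trace = 1) (htrC : C.trace = 1) :
    2 * (1 - fid hA hC) ≤ frobSq (hA.sqrt - hC.sqrt) ∧
      frobSq (hA.sqrt - hC.sqrt) ≤ traceNorm (A - C) ∧
        4 * (1 - fid hA hC) ^ 2 ≤ traceNorm (A - C) ^ 2 := by
  have h1 := PS.part1 hA hC htrA htrC
  have h2 := PS.powers_stormer hA hC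
  have hf1 := PS.fid_le_one hA hC htrA htrC
  have htn := PS.traceNorm_nonneg (A - C)
  refine ⟨h1, h2, ?_⟩
  nlinarith [le_trans h1 h2]
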